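/- Let f : ℝ → ℝ^{1,n} be a piecewise C¹ curve from γ(0) = p to γ(1) = q with γ'(t) future-directed timelike for all t, and let F : ℝ^{1,n} → ℝ be a C¹ function whose Minkowski gradient ∇F (defined by g(∇F, v) = dF(v)) is everywhere past-directed timelike with g(∇F,∇F) ≤ -1. Then F(q) - F(p) ≥ ∫₀¹ sqrt(-g(γ'(t),γ'(t))) dt, i.e. F(q) - F(p) is at least the Lorentzian length of γ. -/

import Mathlib

open scoped BigOperators

/-- Minkowski bilinear form on `ℝ^{1,n}`: `g(v,w) = -v₀w₀ + Σᵢ vᵢwᵢ`. -/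
noncomputable def mink {n : ℕ} (v w : Fin (n+1) → ℝ) : ℝ :=
  -(v 0 * w 0) + ∑ i : Fin n, v i.succ * w i.succ

/-- future-directed timelike -/
def ftimelike {n : ℕ} (v : Fin (n+1) → ℝ) : Prop := mink v v < 0 ∧ 0 < v 0

/-! The gradient `u = G (γ t)` and the velocity `v = γ' t` lie in opposite time cones, so the
reverse Cauchy–Schwarz inequality gives `√(-g(v,v)) ≤ √(-g(u,u)) √(-g(v,v)) ≤ g(u,v)`, and
`g(u,v) = (F ∘ γ)'(t)`. Integrating this pointwise bound (fundamental theorem of calculus as an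
inequality, off the finitely many corners of `γ`) gives the claim. -/

open Set MeasureTheory

lemma Real.sqrt_sq_sub_sq_mul_sqrt_sq_sub_sq_le {a b c d : ℝ} (hb : 0 ≤ b) (hba : b ≤ a)
    (hd : 0 ≤ d) (hdc : d ≤ c) :
    √(a ^ 2 - b ^ 2) * √(c ^ 2 - d ^ 2) ≤ a * c - b * d := by
  have hbd : b * d ≤ a * c := mul_le_mul hba hdc hd (hb.trans hba)
  rw [← Real.sqrt_mul (by nlinarith), ← Real.sqrt_sq (sub_nonneg.2 hbd)]
  -- `(ac - bd)² - (a² - b²)(c² - d²) = (ad - bc)²`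
  exact Real.sqrt_le_sqrt (by nlinarith [sq_nonneg (a * d - b * c)])

section Minkowski

variable {n : ℕ}

lemma mink_self (v : Fin (n+1) → ℝ) : mink v v = -(v 0) ^ 2 + ∑ i : Fin n, v i.succ ^ 2 := by
  simp only [mink, sq]

noncomputable def spatialNorm (v : Fin (n+1) → ℝ) : ℝ := √(∑ i : Fin n, v i.succ ^ 2)

lemma spatialNorm_nonneg (v : Fin (n+1) → ℝ) : 0 ≤ spatialNorm v := Real.sqrt_nonneg _

lemma spatialNorm_sq (v : Fin (n+1) → ℝ) : spatialNorm v ^ 2 = ∑ i : Fin n, v i.succ ^ 2 :=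
  Real.sq_sqrt (Finset.sum_nonneg fun _ _ => sq_nonneg _)

lemma neg_mink_self (v : Fin (n+1) → ℝ) : -mink v v = v 0 ^ 2 - spatialNorm v ^ 2 := by
  rw [mink_self, spatialNorm_sq]; ring

lemma spatialNorm_le_abs_of_mink_self_nonpos {v : Fin (n+1) → ℝ} (hv : mink v v ≤ 0) :
    spatialNorm v ≤ |v 0| := by
  rw [← Real.sqrt_sq_eq_abs]
  exact Real.sqrt_le_sqrt (by linarith [mink_self v])

lemma neg_mul_sub_spatialNorm_mul_le_mink (u v : Fin (n+1) → ℝ) :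
    -(u 0 * v 0) - spatialNorm u * spatialNorm v ≤ mink u v := by
  have hcs := Real.sum_mul_le_sqrt_mul_sqrt Finset.univ (fun i : Fin n => -u i.succ)
    (fun i => v i.succ)
  simp only [neg_mul, Finset.sum_neg_distrib, neg_sq] at hcs
  unfold mink spatialNorm
  linarith

theorem mink_reverse_cauchy_schwarz {u v : Fin (n+1) → ℝ} (hu : mink u u ≤ 0) (hu0 : u 0 ≤ 0)
    (hv : mink v v ≤ 0) (hv0 : 0 ≤ v 0) : √(-mink u u) * √(-mink v v) ≤ mink u v := by
  have hbu : spatialNorm u ≤ -u 0 := by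
    simpa [abs_of_nonpos hu0] using spatialNorm_le_abs_of_mink_self_nonpos hu
  have hbv : spatialNorm v ≤ v 0 := by
    simpa [abs_of_nonneg hv0] using spatialNorm_le_abs_of_mink_self_nonpos hv
  have h := Real.sqrt_sq_sub_sq_mul_sqrt_sq_sub_sq_le (spatialNorm_nonneg u) hbu
    (spatialNorm_nonneg v) hbv
  rw [neg_sq, ← neg_mink_self, ← neg_mink_self] at h
  linarith [neg_mul_sub_spatialNorm_mul_le_mink u v]

theorem sqrt_neg_mink_self_le_mink {u v : Fin (n+1) → ℝ} (hu : mink u u ≤ -1) (hu0 : u 0 ≤ 0)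
    (hv : mink v v ≤ 0) (hv0 : 0 ≤ v 0) : √(-mink v v) ≤ mink u v := by
  have h1 : 1 ≤ √(-mink u u) := Real.one_le_sqrt.2 (by linarith)
  calc √(-mink v v) ≤ √(-mink u u) * √(-mink v v) :=
        le_mul_of_one_le_left (Real.sqrt_nonneg _) h1
    _ ≤ mink u v := mink_reverse_cauchy_schwarz (by linarith) hu0 hv hv0

end Minkowski

theorem integral_le_sub_of_hasDerivAt_of_le_off_finset (s : Finset ℝ) {a b : ℝ}
    {g g' φ : ℝ → ℝ} (hab : a ≤ b) (hcont : ContinuousOn g (Icc a b))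
    (hderiv : ∀ x ∈ Ioo a b \ s, HasDerivAt g (g' x) x) (φint : IntegrableOn φ (Icc a b))
    (hφg : ∀ x ∈ Ioo a b \ s, φ x ≤ g' x) : ∫ y in a..b, φ y ≤ g b - g a := by
  induction s using Finset.induction generalizing a b with
  | empty =>
    simp only [Finset.coe_empty, sdiff_empty] at hderiv hφg
    exact intervalIntegral.integral_le_sub_of_hasDeriv_right_of_le hab hcont
      (fun x hx => (hderiv x hx).hasDerivWithinAt) φint hφg
  | insert c s _ ih =>
    rw [Finset.coe_insert] at hderiv hφg
    by_cases hc : c ∈ Ioo a b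
    · have left : Ioo a c \ s ⊆ Ioo a b \ insert c s := fun x hx =>
        ⟨⟨hx.1.1, hx.1.2.trans hc.2⟩, by simp [hx.2, hx.1.2.ne]⟩
      have right : Ioo c b \ s ⊆ Ioo a b \ insert c s := fun x hx =>
        ⟨⟨hc.1.trans hx.1.1, hx.1.2⟩, by simp [hx.2, hx.1.1.ne']⟩
      have hac : Icc a c ⊆ Icc a b := Icc_subset_Icc le_rfl hc.2.le
      have hcb : Icc c b ⊆ Icc a b := Icc_subset_Icc hc.1.le le_rfl
      have h₁ := ih hc.1.le (hcont.mono hac) (fun x hx => hderiv x (left hx))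
        (φint.mono_set hac) (fun x hx => hφg x (left hx))
      have h₂ := ih hc.2.le (hcont.mono hcb) (fun x hx => hderiv x (right hx))
        (φint.mono_set hcb) (fun x hx => hφg x (right hx))
      rw [← intervalIntegral.integral_add_adjacent_intervals
        ((intervalIntegrable_iff_integrableOn_Icc_of_le hc.1.le).2 (φint.mono_set hac))
        ((intervalIntegrable_iff_integrableOn_Icc_of_le hc.2.le).2 (φint.mono_set hcb))]
      linarith
    · rw [sdiff_insert_of_notMem hc] at hderiv hφg
      exact ih hab hcont hderiv φint hφg

/-- Along a piecewise C¹ future-directed timelike curve, a C¹ function whose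
Minkowski gradient is everywhere past-directed timelike with `g(∇F,∇F) ≤ -1`
increases at least by the Lorentzian length of the curve. -/
theorem increase_ge_length {n : ℕ} (γ γ' : ℝ → Fin (n+1) → ℝ) (s : Finset ℝ)
    (hγc : ContinuousOn γ (Set.Icc 0 1))
    (hder : ∀ t ∈ Set.Icc (0:ℝ) 1 \ (s : Set ℝ), HasDerivAt γ (γ' t) t)
    (htl : ∀ t ∈ Set.Icc (0:ℝ) 1 \ (s : Set ℝ), ftimelike (γ' t))
    (hint : IntervalIntegrable (fun t => Real.sqrt (-(mink (γ' t) (γ' t))))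
      MeasureTheory.volume 0 1)
    (F : (Fin (n+1) → ℝ) → ℝ) (hF : ContDiff ℝ 1 F)
    (G : (Fin (n+1) → ℝ) → (Fin (n+1) → ℝ))
    (hG : ∀ x v, mink (G x) v = fderiv ℝ F x v)
    (hGeik : ∀ x, mink (G x) (G x) ≤ -1) (hGpast : ∀ x, G x 0 < 0)
    (p q : Fin (n+1) → ℝ) (hp : γ 0 = p) (hq : γ 1 = q) :
    F q - F p ≥ ∫ t in (0:ℝ)..1, Real.sqrt (-(mink (γ' t) (γ' t))) := by
  subst hp hq
  have hIoo : Ioo (0:ℝ) 1 \ s ⊆ Icc 0 1 \ s := sdiff_subset_sdiff_left Ioo_subset_Icc_self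
  have hchain : ∀ t ∈ Ioo (0:ℝ) 1 \ s,
      HasDerivAt (fun t => F (γ t)) (mink (G (γ t)) (γ' t)) t := fun t ht => by
    rw [hG]
    exact ((hF.differentiable one_ne_zero _).hasFDerivAt).comp_hasDerivAt t (hder t (hIoo ht))
  refine integral_le_sub_of_hasDerivAt_of_le_off_finset s zero_le_one
    (hF.continuous.comp_continuousOn hγc) hchain
    ((intervalIntegrable_iff_integrableOn_Icc_of_le zero_le_one).1 hint) fun t ht => ?_
  obtain ⟨hv, hv0⟩ := htl t (hIoo ht)
  exact sqrt_neg_mink_self_le_mink (hGeik _) (hGpast _).le hv.le hv0.le
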